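/- For the epistemic space E² = ⟨𝓔₂, mod⟩: AGM revision is realizable in E², yet there exists no full meet revision operator for E². -/

import Mathlib

/-! In `E²` every state has at most one model, so its model sets are closed under subsets and
contain every singleton. Hence linear revision (keep `mod Ψ ∩ A` when it is consistent, otherwise
move to a state whose only model is the least model of `A`) is realisable and is AGM. Full meet
revision of `Ψ₁` by `{ω₂, ω₃}` would instead need a state with two models. -/

open Set

/-- `minSet r S` is the set of `r`-minimal elements of `S`:
`min(S, r) = {ω ∈ S : r ω ω' for all ω' ∈ S}`. -/
def minSet {Ω : Type*} (r : Ω → Ω → Prop) (S : Set Ω) : Set Ω :=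
  {ω ∈ S | ∀ ω' ∈ S, r ω ω'}

/-- A linear order as a relation: total, antisymmetric and transitive. -/
def IsLinRel {Ω : Type*} (r : Ω → Ω → Prop) : Prop :=
  (∀ a b, r a b ∨ r b a) ∧ (∀ a b, r a b → r b a → a = b) ∧
    (∀ a b c, r a b → r b c → r a c)

/-- AGM contraction operator for the epistemic space `⟨E, md⟩` (postulates C1–C7,
formulated on model sets). -/
def IsContraction {Ω E : Type*} (md : E → Set Ω) (c : E → Set Ω → E) : Prop :=
  ∀ (Ψ : E) (A B : Set Ω),
    md Ψ ⊆ md (c Ψ A) ∧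
    (¬ md Ψ ⊆ A → md (c Ψ A) ⊆ md Ψ) ∧
    (A ≠ Set.univ → ¬ md (c Ψ A) ⊆ A) ∧
    md (c Ψ A) ∩ A ⊆ md Ψ ∧
    md (c Ψ (A ∩ B)) ⊆ md (c Ψ A) ∪ md (c Ψ B) ∧
    (¬ md (c Ψ (A ∩ B)) ⊆ B → md (c Ψ B) ⊆ md (c Ψ (A ∩ B)))

/-- AGM revision operator for the epistemic space `⟨E, md⟩` (postulates R1–R6,
formulated on model sets). -/
def IsRevision {Ω E : Type*} (md : E → Set Ω) (s : E → Set Ω → E) : Prop :=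
  ∀ (Ψ : E) (A B : Set Ω),
    md (s Ψ A) ⊆ A ∧
    (md Ψ ∩ A ≠ ∅ → md (s Ψ A) = md Ψ ∩ A) ∧
    (A ≠ ∅ → md (s Ψ A) ≠ ∅) ∧
    md (s Ψ A) ∩ B ⊆ md (s Ψ (A ∩ B)) ∧
    (md (s Ψ A) ∩ B ≠ ∅ → md (s Ψ (A ∩ B)) ⊆ md (s Ψ A) ∩ B)

/-- Postulate (ZC). -/
def ZC {Ω E : Type*} (md : E → Set Ω) : Prop :=
  ∀ (Ψ : E) (M : Set Ω), md Ψ ⊆ M → ∃ Ψ' : E, md Ψ' = M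

/-- Postulate (ZR1). -/
def ZR1 {Ω E : Type*} (md : E → Set Ω) : Prop :=
  ∀ ω : Ω, ∃ Ψ : E, md Ψ = {ω}

/-- Postulate (ZR2). -/
def ZR2 {Ω E : Type*} (md : E → Set Ω) : Prop :=
  ∀ (Ψ : E) (M : Set Ω), M ⊆ md Ψ → ∃ Ψ' : E, md Ψ' = M

/-- Postulate (Unbiased). -/
def Unbiased {Ω E : Type*} (md : E → Set Ω) : Prop :=
  ∀ M : Set Ω, ∃ Ψ : E, md Ψ = M

/-- Maxichoice contraction operator. -/
def IsMaxichoiceContraction {Ω E : Type*} (md : E → Set Ω) (c : E → Set Ω → E) : Prop :=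
  IsContraction md c ∧
    ∀ Ψ : E, ∃ r : Ω → Ω → Prop, IsLinRel r ∧ ∀ A : Set Ω,
      (¬ md Ψ ⊆ A → md (c Ψ A) = md Ψ) ∧
      (md Ψ ⊆ A → md (c Ψ A) = md Ψ ∪ minSet r Aᶜ)

/-- Linear contraction operator: a maxichoice contraction operator based on one
single linear order for all epistemic states. -/
def IsLinearContraction {Ω E : Type*} (md : E → Set Ω) (c : E → Set Ω → E) : Prop :=
  IsContraction md c ∧
    ∃ r : Ω → Ω → Prop, IsLinRel r ∧ ∀ (Ψ : E) (A : Set Ω),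
      (¬ md Ψ ⊆ A → md (c Ψ A) = md Ψ) ∧
      (md Ψ ⊆ A → md (c Ψ A) = md Ψ ∪ minSet r Aᶜ)

/-- Full meet contraction operator. -/
def IsFullMeetContraction {Ω E : Type*} (md : E → Set Ω) (c : E → Set Ω → E) : Prop :=
  IsContraction md c ∧
    ∀ (Ψ : E) (A : Set Ω),
      (¬ md Ψ ⊆ A → md (c Ψ A) = md Ψ) ∧
      (md Ψ ⊆ A → md (c Ψ A) = md Ψ ∪ Aᶜ)

/-- Maxichoice revision operator. -/
def IsMaxichoiceRevision {Ω E : Type*} (md : E → Set Ω) (s : E → Set Ω → E) : Prop :=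
  IsRevision md s ∧
    ∀ Ψ : E, ∃ r : Ω → Ω → Prop, IsLinRel r ∧ ∀ A : Set Ω,
      (md Ψ ∩ A ≠ ∅ → md (s Ψ A) = md Ψ ∩ A) ∧
      (md Ψ ∩ A = ∅ → md (s Ψ A) = minSet r A)

/-- Linear revision operator: a maxichoice revision operator based on one single
linear order for all epistemic states. -/
def IsLinearRevision {Ω E : Type*} (md : E → Set Ω) (s : E → Set Ω → E) : Prop :=
  IsRevision md s ∧
    ∃ r : Ω → Ω → Prop, IsLinRel r ∧ ∀ (Ψ : E) (A : Set Ω),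
      (md Ψ ∩ A ≠ ∅ → md (s Ψ A) = md Ψ ∩ A) ∧
      (md Ψ ∩ A = ∅ → md (s Ψ A) = minSet r A)

/-- Full meet revision operator. -/
def IsFullMeetRevision {Ω E : Type*} (md : E → Set Ω) (s : E → Set Ω → E) : Prop :=
  IsRevision md s ∧
    ∀ (Ψ : E) (A : Set Ω),
      (md Ψ ∩ A ≠ ∅ → md (s Ψ A) = md Ψ ∩ A) ∧
      (md Ψ ∩ A = ∅ → md (s Ψ A) = A)


/-- The epistemic space `E²` over `Ω₂ = Fin 4` (worlds `ω₁, ω₂, ω₃, ω₄`):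
five states `Ψ₁, Ψ₂, Ψ₃, Ψ₄, Ψ_⊥` with `mod Ψᵢ = {ωᵢ}` and `mod Ψ_⊥ = ∅`. -/
def md2 : Fin 5 → Set (Fin 4) := ![{0}, {1}, {2}, {3}, ∅]

section LinearRevision

variable {Ω : Type*}

lemma minSet_subset (r : Ω → Ω → Prop) (A : Set Ω) : minSet r A ⊆ A :=
  fun _ hω => hω.1

lemma minSet_inter_subset (r : Ω → Ω → Prop) (A B : Set Ω) :
    minSet r A ∩ B ⊆ minSet r (A ∩ B) :=
  fun _ ⟨⟨hA, hmin⟩, hB⟩ => ⟨⟨hA, hB⟩, fun ω' hω' => hmin ω' hω'.1⟩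

lemma minSet_inter_subset_of_nonempty {r : Ω → Ω → Prop}
    (hr : ∀ a b c, r a b → r b c → r a c) {A B : Set Ω} (h : (minSet r A ∩ B).Nonempty) :
    minSet r (A ∩ B) ⊆ minSet r A ∩ B := by
  obtain ⟨m, ⟨hmA, hm⟩, hmB⟩ := h
  rintro ω ⟨⟨hωA, hωB⟩, hω⟩
  exact ⟨⟨hωA, fun ω' hω' => hr _ _ _ (hω m ⟨hmA, hmB⟩) (hm ω' hω')⟩, hωB⟩

lemma not_nonempty_inter_inter {K A : Set Ω} (h : ¬ (K ∩ A).Nonempty) (B : Set Ω) :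
    ¬ (K ∩ (A ∩ B)).Nonempty :=
  fun hAB => h (hAB.mono (inter_subset_inter_right K inter_subset_left))

variable [LinearOrder Ω]

lemma minSet_le_subsingleton (A : Set Ω) : (minSet (· ≤ ·) A).Subsingleton :=
  fun _ ha _ hb => le_antisymm (ha.2 _ hb.1) (hb.2 _ ha.1)

lemma minSet_le_nonempty [WellFoundedLT Ω] {A : Set Ω} (hA : A.Nonempty) :
    (minSet (· ≤ ·) A).Nonempty := by
  obtain ⟨m, hmA, hm⟩ := wellFounded_lt.has_min A hA
  exact ⟨m, hmA, fun ω hω => not_lt.1 (hm ω hω)⟩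

/-- Minimisation of `A` over the total preorder that puts `K` below its complement and orders
the complement by `≤`; this is why it obeys the AGM postulates. -/
noncomputable def linearRevisionModels (K A : Set Ω) : Set Ω :=
  open Classical in if (K ∩ A).Nonempty then K ∩ A else minSet (· ≤ ·) A

variable {K A : Set Ω}

lemma linearRevisionModels_of_nonempty (h : (K ∩ A).Nonempty) :
    linearRevisionModels K A = K ∩ A := by
  simp [linearRevisionModels, h]

lemma linearRevisionModels_of_not_nonempty (h : ¬ (K ∩ A).Nonempty) :
    linearRevisionModels K A = minSet (· ≤ ·) A := by
  simp [linearRevisionModels, h]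

lemma linearRevisionModels_subset : linearRevisionModels K A ⊆ A := by
  by_cases h : (K ∩ A).Nonempty
  · simp [linearRevisionModels_of_nonempty h]
  · simpa [linearRevisionModels_of_not_nonempty h] using minSet_subset _ A

lemma linearRevisionModels_nonempty [WellFoundedLT Ω] (hA : A.Nonempty) :
    (linearRevisionModels K A).Nonempty := by
  by_cases h : (K ∩ A).Nonempty
  · rwa [linearRevisionModels_of_nonempty h]
  · simpa [linearRevisionModels_of_not_nonempty h] using minSet_le_nonempty hA

lemma linearRevisionModels_inter_subset (B : Set Ω) :
    linearRevisionModels K A ∩ B ⊆ linearRevisionModels K (A ∩ B) := by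
  by_cases h : (K ∩ A).Nonempty
  · rw [linearRevisionModels_of_nonempty h]
    rintro ω ⟨⟨hωK, hωA⟩, hωB⟩
    rw [linearRevisionModels_of_nonempty (A := A ∩ B) ⟨ω, hωK, hωA, hωB⟩]
    exact ⟨hωK, hωA, hωB⟩
  · rw [linearRevisionModels_of_not_nonempty h,
      linearRevisionModels_of_not_nonempty (not_nonempty_inter_inter h B)]
    exact minSet_inter_subset _ A B

lemma linearRevisionModels_inter_subset_of_nonempty {B : Set Ω}
    (hB : (linearRevisionModels K A ∩ B).Nonempty) :
    linearRevisionModels K (A ∩ B) ⊆ linearRevisionModels K A ∩ B := by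
  by_cases h : (K ∩ A).Nonempty
  · rw [linearRevisionModels_of_nonempty h] at hB ⊢
    rw [linearRevisionModels_of_nonempty (by rwa [← inter_assoc]), inter_assoc]
  · rw [linearRevisionModels_of_not_nonempty h] at hB ⊢
    rw [linearRevisionModels_of_not_nonempty (not_nonempty_inter_inter h B)]
    exact minSet_inter_subset_of_nonempty (fun _ _ _ hab hbc => hab.trans hbc) hB

lemma exists_md_eq_linearRevisionModels {E : Type*} {md : E → Set Ω} (h1 : ZR1 md)
    (h2 : ZR2 md) (Ψ : E) (A : Set Ω) : ∃ Ψ', md Ψ' = linearRevisionModels (md Ψ) A := by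
  by_cases h : (md Ψ ∩ A).Nonempty
  · rw [linearRevisionModels_of_nonempty h]
    exact h2 Ψ _ inter_subset_left
  · rw [linearRevisionModels_of_not_nonempty h]
    rcases (minSet_le_subsingleton A).eq_empty_or_singleton with hmin | ⟨ω, hmin⟩ <;> rw [hmin]
    · exact h2 Ψ ∅ (empty_subset _)
    · exact h1 ω

end LinearRevision

theorem exists_isRevision_of_zr1_of_zr2 {Ω E : Type*} (md : E → Set Ω) (h1 : ZR1 md)
    (h2 : ZR2 md) : ∃ s : E → Set Ω → E, IsRevision md s := by
  let _ : LinearOrder Ω := WellOrderingRel.isWellOrder.linearOrder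
  have : WellFoundedLT Ω := ⟨WellOrderingRel.isWellOrder.wf⟩
  choose s hs using exists_md_eq_linearRevisionModels h1 h2
  refine ⟨s, fun Ψ A B => ?_⟩
  simp only [hs, ← nonempty_iff_ne_empty]
  exact ⟨linearRevisionModels_subset, linearRevisionModels_of_nonempty,
    linearRevisionModels_nonempty, linearRevisionModels_inter_subset B,
    linearRevisionModels_inter_subset_of_nonempty⟩

theorem IsFullMeetRevision.exists_md_eq {Ω E : Type*} {md : E → Set Ω} {s : E → Set Ω → E}
    (hs : IsFullMeetRevision md s) {Ψ : E} {A : Set Ω} (hΨA : md Ψ ∩ A = ∅) :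
    ∃ Ψ', md Ψ' = A :=
  ⟨s Ψ A, (hs.2 Ψ A).2 hΨA⟩

lemma md2_subsingleton (Ψ : Fin 5) : (md2 Ψ).Subsingleton := by
  fin_cases Ψ <;> simp [md2]

lemma zr1_md2 : ZR1 md2 :=
  fun ω => ⟨ω.castSucc, by fin_cases ω <;> rfl⟩

lemma zr2_md2 : ZR2 md2 := fun Ψ M hM => by
  rcases ((md2_subsingleton Ψ).anti hM).eq_empty_or_singleton with rfl | ⟨ω, rfl⟩
  · exact ⟨4, rfl⟩
  · exact zr1_md2 ω

/-- AGM revision is realizable in `E²`, yet there exists no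
full meet revision operator for `E²`. -/
theorem E2_revision_realizable_no_fullMeet :
    (∃ s : Fin 5 → Set (Fin 4) → Fin 5, IsRevision md2 s) ∧
      ¬ (∃ s : Fin 5 → Set (Fin 4) → Fin 5, IsFullMeetRevision md2 s) := by
  refine ⟨exists_isRevision_of_zr1_of_zr2 md2 zr1_md2 zr2_md2, ?_⟩
  rintro ⟨s, hs⟩
  obtain ⟨Ψ, hΨ⟩ := hs.exists_md_eq (Ψ := 0) (A := {1, 2}) (by ext ω; fin_cases ω <;> simp [md2])
  have hpair : ({1, 2} : Set (Fin 4)).Subsingleton := hΨ ▸ md2_subsingleton Ψ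
  exact absurd (hpair (by simp : (1 : Fin 4) ∈ _) (by simp : (2 : Fin 4) ∈ _)) (by decide)
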